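/- arXiv:2511.12261 — 2 statements merged into one kernel-verified Lean document; each statement's English description precedes it below -/
import Mathlib

section
/- Let q ∈ ℝ^n with q₁ ≤ … ≤ q_n, k < n, ξ = (k·q_{k+1} − Σ_{t=1}^k q_t)/2 > 0, and ψ = 1/k + (1/(2kξ))·Σ_{t=1}^k q_t. Then ψ − q_k/(2ξ) > 0 and ψ − q_{k+1}/(2ξ) ≤ 0, provided q_k < q_{k+1}. -/
theorem stmt_8 (n k : ℕ) (q : ℕ → ℝ) (hk1 : 1 ≤ k) (hkn : k < n)
    (hsorted : ∀ i j, 1 ≤ i → i ≤ j → j ≤ n → q i ≤ q j)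
    (ξ ψ : ℝ)
    (hξ : ξ = ((k : ℝ) * q (k + 1) - ∑ t ∈ Finset.Icc 1 k, q t) / 2)
    (hξpos : 0 < ξ)
    (hψ : ψ = 1 / (k : ℝ) + (1 / (2 * (k : ℝ) * ξ)) * ∑ t ∈ Finset.Icc 1 k, q t)
    (hqk : q k < q (k + 1)) :
    ψ - q k / (2 * ξ) > 0 ∧ ψ - q (k + 1) / (2 * ξ) ≤ 0 := by
  have hkpos : (0 : ℝ) < k := by exact_mod_cast hk1
  have hS : (∑ t ∈ Finset.Icc 1 k, q t) = (k : ℝ) * q (k + 1) - 2 * ξ := by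
    rw [hξ]; ring
  have hψ' : ψ = q (k + 1) / (2 * ξ) := by
    rw [hψ, hS]
    field_simp
    ring
  constructor
  · rw [hψ']
    have : 0 < (q (k+1) - q k) / (2 * ξ) := div_pos (by linarith) (by linarith)
    have h2 : (q (k+1) - q k) / (2 * ξ) = q (k+1) / (2*ξ) - q k / (2*ξ) := by ring
    linarith [h2 ▸ this]
  · rw [hψ']; linarith
end

section
/- Let Ŵ be a minimizer of G(W) = ‖X̂ − W Bᵀ‖_F² + λ·Tr(Wᵀ D W), where D is the diagonal matrix with D_{ii} = 1/(2‖W⁰_{i·}‖₂) built from the previous iterate W⁰ (with all rows nonzero). Then ‖X̂ − Ŵ Bᵀ‖_F² + λ‖Ŵ‖_{2,1} ≤ ‖X̂ − W⁰ Bᵀ‖_F² + λ‖W⁰‖_{2,1}, where ‖W‖_{2,1} = Σ_i ‖W_{i·}‖₂. -/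
/-! Majorization–minimization: by AM–GM, `‖w‖ ≤ ‖w‖² / (2s) + s / 2` for `s > 0`, with equality at
`‖w‖ = s`. Taking for `s` the row norms of `W⁰`, the surrogate `G(W) + λ ∑ᵢ ‖W⁰ᵢ‖ / 2` lies above the
ℓ₂,₁-regularized objective everywhere and touches it at `W⁰`, so minimizing `G` cannot increase the
objective. -/

open Matrix

/-- Euclidean norm of a finite real vector. -/
noncomputable def vecEnorm {m : Type*} [Fintype m] (v : m → ℝ) : ℝ :=
  Real.sqrt (∑ i, v i ^ 2)

/-- Squared Frobenius norm of a real matrix. -/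
def frobSq {d n : ℕ} (A : Matrix (Fin d) (Fin n) ℝ) : ℝ := ∑ i, ∑ j, A i j ^ 2

section

variable {m : Type*} [Fintype m]

lemma vecEnorm_sq (v : m → ℝ) : vecEnorm v ^ 2 = ∑ i, v i ^ 2 :=
  Real.sq_sqrt (Finset.sum_nonneg fun i _ => sq_nonneg (v i))

lemma vecEnorm_pos {v : m → ℝ} (hv : v ≠ 0) : 0 < vecEnorm v := by
  obtain ⟨i, hi⟩ := Function.ne_iff.mp hv
  exact Real.sqrt_pos.mpr <|
    Finset.sum_pos' (fun j _ => sq_nonneg (v j)) ⟨i, Finset.mem_univ i, sq_pos_of_ne_zero hi⟩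

end

lemma trace_transpose_mul_diagonal_mul {m n R : Type*} [Fintype m] [Fintype n] [DecidableEq m]
    [CommSemiring R] (f : m → R) (W : Matrix m n R) :
    trace (Wᵀ * diagonal f * W) = ∑ i, f i * ∑ k, W i k ^ 2 := by
  simp only [trace, diag_apply, mul_apply, transpose_apply, diagonal_apply, mul_ite, mul_zero,
    Finset.sum_ite_eq', Finset.mem_univ, if_true, Finset.mul_sum]
  rw [Finset.sum_comm]
  exact Finset.sum_congr rfl fun i _ => Finset.sum_congr rfl fun k _ => by ring

lemma le_one_div_mul_sq_add_half {a s : ℝ} (hs : 0 < s) : a ≤ 1 / (2 * s) * a ^ 2 + s / 2 := by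
  have key : 1 / (2 * s) * a ^ 2 + s / 2 - a = (a - s) ^ 2 / (2 * s) := by
    field_simp; ring
  linarith [div_nonneg (sq_nonneg (a - s)) (by positivity : (0 : ℝ) ≤ 2 * s)]

-- Also true at `s = 0`, where `1 / 0 = 0`.
lemma one_div_mul_sq_add_half_self (s : ℝ) : 1 / (2 * s) * s ^ 2 + s / 2 = s := by
  rcases eq_or_ne s 0 with rfl | hs
  · simp
  · field_simp; ring

section Reweighting

variable {m n : Type*} [Fintype m] [Fintype n] [DecidableEq m]

noncomputable def reweightDiag (W₀ : Matrix m n ℝ) : Matrix m m ℝ :=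
  diagonal fun i => 1 / (2 * vecEnorm (W₀ i))

lemma sum_vecEnorm_le_trace_reweightDiag_add {W₀ : Matrix m n ℝ} (hW₀ : ∀ i, W₀ i ≠ 0)
    (W : Matrix m n ℝ) :
    ∑ i, vecEnorm (W i) ≤ trace (Wᵀ * reweightDiag W₀ * W) + ∑ i, vecEnorm (W₀ i) / 2 := by
  rw [reweightDiag, trace_transpose_mul_diagonal_mul, ← Finset.sum_add_distrib]
  refine Finset.sum_le_sum fun i _ => ?_
  rw [← vecEnorm_sq]
  exact le_one_div_mul_sq_add_half (vecEnorm_pos (hW₀ i))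

lemma trace_reweightDiag_self_add (W₀ : Matrix m n ℝ) :
    trace (W₀ᵀ * reweightDiag W₀ * W₀) + ∑ i, vecEnorm (W₀ i) / 2 = ∑ i, vecEnorm (W₀ i) := by
  rw [reweightDiag, trace_transpose_mul_diagonal_mul, ← Finset.sum_add_distrib]
  simp only [← vecEnorm_sq, one_div_mul_sq_add_half_self]

end Reweighting

theorem stmt_13 (d n c : ℕ) (Xhat : Matrix (Fin d) (Fin n) ℝ)
    (B : Matrix (Fin n) (Fin c) ℝ) (lam : ℝ) (hlam : 0 < lam)
    (W0 What : Matrix (Fin d) (Fin c) ℝ)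
    (hrows : ∀ i, W0 i ≠ 0)
    (D : Matrix (Fin d) (Fin d) ℝ)
    (hD : D = Matrix.diagonal (fun i => 1 / (2 * vecEnorm (W0 i))))
    (hmin : ∀ W : Matrix (Fin d) (Fin c) ℝ,
      frobSq (Xhat - What * Bᵀ) + lam * Matrix.trace (Whatᵀ * D * What) ≤
        frobSq (Xhat - W * Bᵀ) + lam * Matrix.trace (Wᵀ * D * W)) :
    frobSq (Xhat - What * Bᵀ) + lam * ∑ i, vecEnorm (What i) ≤
      frobSq (Xhat - W0 * Bᵀ) + lam * ∑ i, vecEnorm (W0 i) := by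
  change D = reweightDiag W0 at hD
  subst hD
  set c₀ := ∑ i, vecEnorm (W0 i) / 2
  calc frobSq (Xhat - What * Bᵀ) + lam * ∑ i, vecEnorm (What i)
      ≤ frobSq (Xhat - What * Bᵀ) + lam * (trace (Whatᵀ * reweightDiag W0 * What) + c₀) := by
        gcongr
        exact sum_vecEnorm_le_trace_reweightDiag_add hrows What
    _ ≤ frobSq (Xhat - W0 * Bᵀ) + lam * (trace (W0ᵀ * reweightDiag W0 * W0) + c₀) := by
        linarith [hmin W0]
    _ = frobSq (Xhat - W0 * Bᵀ) + lam * ∑ i, vecEnorm (W0 i) := by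
        rw [trace_reweightDiag_self_add]
end
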